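/- In the realizable equal-opportunity construction: let 0 ≤ α < 1/2, 0 < P10 ≤ P11 < 1, η = α/(1−α) ≤ 2·P10. Define ℙ_0 on {x1,...,x5} × {0,1} × {0,1} by ℙ_0(x1,1,1)=P11−η/2, ℙ_0(x2,0,1)=P10−η/2, ℙ_0(x3,0,1)=η/2, ℙ_0(x4,1,1)=η/2, ℙ_0(x5,0,0)=1−P10−P11. Let h0 satisfy h0(x1)=h0(x2)=h0(x3)=1, h0(x4)=h0(x5)=0, and h1 satisfy h1(x1)=h1(x2)=1, h1(x3)=0, h1(x4)=1, h1(x5)=0. Then the equal opportunity deviations satisfy D(h0) = η/(2·P11), D(h1) = η/(2·P10), and D(h1) − D(h0) = (η/(2·P10))·(1 − P10/P11). -/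
import Mathlib


/-- The clean distribution `ℙ₀` of the realizable equal-opportunity lower-bound
construction, as a mass function on `Fin 5 × Bool × Bool`
(point, protected attribute, label); `false` encodes `0` and `true` encodes `1`. -/
noncomputable def oppDist (P10 P11 η : ℝ) : Fin 5 × Bool × Bool → ℝ := fun z =>
  if z = (0, true, true) then P11 - η/2
  else if z = (1, false, true) then P10 - η/2
  else if z = (2, false, true) then η/2
  else if z = (3, true, true) then η/2
  else if z = (4, false, false) then 1 - P10 - P11
  else 0

/-- `ℙ(h(X) = 1 ∣ A = a, Y = 1)` for a mass function `p` and classifier `h`. -/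
noncomputable def oppCondProb (p : Fin 5 × Bool × Bool → ℝ) (h : Fin 5 → Bool) (a : Bool) : ℝ :=
  (∑ x : Fin 5, if h x then p (x, a, true) else 0) / (∑ x : Fin 5, p (x, a, true))

/-- Equal opportunity deviation measure of classifier `h` under mass function `p`. -/
noncomputable def oppDev (p : Fin 5 × Bool × Bool → ℝ) (h : Fin 5 → Bool) : ℝ :=
  |oppCondProb p h false - oppCondProb p h true|

/-- The classifier `h₀`: predicts 1 on x₁, x₂, x₃ and 0 on x₄, x₅. -/
def gZero : Fin 5 → Bool := fun x => x == 0 || x == 1 || x == 2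

/-- The classifier `h₁`: predicts 1 on x₁, x₂, x₄ and 0 on x₃, x₅. -/
def gOne : Fin 5 → Bool := fun x => x == 0 || x == 1 || x == 3

/-- equal-opportunity deviations in the realizable construction. -/
theorem stmt14 (α P10 P11 η : ℝ) (hα0 : 0 ≤ α) (hα1 : α < 1/2)
    (hP10 : 0 < P10) (hP11 : P10 ≤ P11) (hP11' : P11 < 1) (hsum : P10 + P11 < 1)
    (hη : η = α/(1-α)) (hηle : η ≤ 2*P10) :
    oppDev (oppDist P10 P11 η) gZero = η/(2*P11) ∧
    oppDev (oppDist P10 P11 η) gOne = η/(2*P10) ∧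
    oppDev (oppDist P10 P11 η) gOne - oppDev (oppDist P10 P11 η) gZero =
      η/(2*P10) * (1 - P10/P11) := by

  have h1α : 0 < 1 - α := by linarith
  have hη0 : 0 ≤ η := by rw [hη]; positivity
  have hP11pos : 0 < P11 := lt_of_lt_of_le hP10 hP11
  have e0 : oppDev (oppDist P10 P11 η) gZero = η/(2*P11) := by
    unfold oppDev oppCondProb
    simp only [Fin.sum_univ_five, oppDist, gZero]
    norm_num [Prod.ext_iff, show (0:Fin 5) ≠ 1 by decide, show (0:Fin 5) ≠ 2 by decide, show (0:Fin 5) ≠ 3 by decide, show (0:Fin 5) ≠ 4 by decide, show (1:Fin 5) ≠ 0 by decide, show (1:Fin 5) ≠ 2 by decide, show (1:Fin 5) ≠ 3 by decide, show (1:Fin 5) ≠ 4 by decide, show (2:Fin 5) ≠ 0 by decide, show (2:Fin 5) ≠ 1 by decide, show (2:Fin 5) ≠ 3 by decide, show (2:Fin 5) ≠ 4 by decide, show (3:Fin 5) ≠ 0 by decide, show (3:Fin 5) ≠ 1 by decide, show (3:Fin 5) ≠ 2 by decide, show (3:Fin 5) ≠ 4 by decide, show (4:Fin 5) ≠ 0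 by decide, show (4:Fin 5) ≠ 1 by decide, show (4:Fin 5) ≠ 2 by decide, show (4:Fin 5) ≠ 3 by decide]
    rw [abs_of_nonneg]
    · rw [div_self hP10.ne']
      field_simp
      ring
    · have : (P11 - η/2)/P11 ≤ 1 := by
        rw [div_le_one hP11pos]; linarith
      linarith [div_self hP10.ne']
  have e1 : oppDev (oppDist P10 P11 η) gOne = η/(2*P10) := by
    unfold oppDev oppCondProb
    simp only [Fin.sum_univ_five, oppDist, gOne]
    norm_num [Prod.ext_iff, show (0:Fin 5) ≠ 1 by decide, show (0:Fin 5) ≠ 2 by decide, show (0:Fin 5) ≠ 3 by decide, show (0:Fin 5) ≠ 4 by decide, show (1:Fin 5) ≠ 0 by decide, show (1:Fin 5) ≠ 2 by decide, show (1:Fin 5) ≠ 3 by decide, show (1:Fin 5) ≠ 4 by decide, show (2:Fin 5) ≠ 0 by decide, show (2:Fin 5) ≠ 1 by decide, show (2:Fin 5) ≠ 3 by decide, show (2:Fin 5) ≠ 4 by decide, show (3:Fin 5) ≠ 0 by decide, show (3:Fin 5) ≠ 1 by decide, show (3:Fin 5) ≠ 2 by decide, show (3:Fin 5) ≠ 4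 by decide, show (4:Fin 5) ≠ 0 by decide, show (4:Fin 5) ≠ 1 by decide, show (4:Fin 5) ≠ 2 by decide, show (4:Fin 5) ≠ 3 by decide]
    rw [abs_of_nonpos]
    · rw [div_self hP11pos.ne']
      field_simp
      ring
    · have : (P10 - η/2)/P10 ≤ 1 := by
        rw [div_le_one hP10]; linarith
      linarith [div_self hP11pos.ne']
  refine ⟨e0, e1, ?_⟩
  rw [e0, e1]
  field_simp
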